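/- arXiv:1912.02906 — 6 statements merged into one kernel-verified Lean document; each statement's English description precedes it below -/
import Mathlib

section
/- Let V be a finite set and let TD : (V → ℝ) → (V → ℝ) be a γ-contraction in the sup norm (γ ∈ (0,1)) with fixed point Q*. Let Φ : (W → ℝ) → (V → ℝ) and Π : (V → ℝ) → (W → ℝ) be sup-norm non-expansive linear maps, where W is a finite set. Then g = Π ∘ TD ∘ Φ is a γ-contraction on (W → ℝ) in the sup norm, and if Q̂* is its unique fixed point, then ‖Φ Q̂* − Q*‖_∞ ≤ (1/(1−γ)) ‖Φ Π Q* − Q*‖_∞. -/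
open NNReal Function

theorem AddMonoidHomClass.lipschitzWith_one_of_norm_le {𝓕 E F : Type*}
    [SeminormedAddCommGroup E] [SeminormedAddCommGroup F] [FunLike 𝓕 E F]
    [AddMonoidHomClass 𝓕 E F] (f : 𝓕) (h : ∀ x, ‖f x‖ ≤ ‖x‖) : LipschitzWith 1 f := by
  simpa using AddMonoidHomClass.lipschitz_of_bound f 1 (by simpa using h)

/-- `Φ ∘ P ∘ T` is again a `K`-contraction, and `Φ` maps fixed points of `P ∘ T ∘ Φ` to its fixed
points, so the a posteriori estimate of the Banach fixed point theorem applies at `q`. -/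
theorem ContractingWith.dist_projected_fixedPoint_le {X Y : Type*} [MetricSpace X]
    [PseudoEMetricSpace Y] {K : ℝ≥0} {T : X → X} {P : X → Y} {Φ : Y → X}
    (hT : ContractingWith K T) (hP : LipschitzWith 1 P) (hΦ : LipschitzWith 1 Φ) {q : X}
    (hq : IsFixedPt T q) {p : Y} (hp : IsFixedPt (P ∘ T ∘ Φ) p) :
    dist (Φ p) q ≤ dist (Φ (P q)) q / (1 - K) := by
  have hc : ContractingWith K (Φ ∘ P ∘ T) := ⟨hT.1, by simpa using hΦ.comp (hP.comp hT.2)⟩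
  have hfix : IsFixedPt (Φ ∘ P ∘ T) (Φ p) := congrArg Φ hp
  rw [dist_comm, dist_comm (Φ (P q))]
  simpa [hq.eq] using hc.dist_le_of_fixedPoint q hfix

theorem projected_bellman_fixed_point_error_general
    {V W : Type*} [Fintype V] [Fintype W]
    (γ : ℝ) (hγ : γ ∈ Set.Ioo (0:ℝ) 1)
    (TD : (V → ℝ) → (V → ℝ))
    (hTD : ∀ f g : V → ℝ, ‖TD f - TD g‖ ≤ γ * ‖f - g‖)
    (Qstar : V → ℝ) (hQstar : TD Qstar = Qstar)
    (Φ : (W → ℝ) →ₗ[ℝ] (V → ℝ)) (Pr : (V → ℝ) →ₗ[ℝ] (W → ℝ))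
    (hΦ : ∀ f : W → ℝ, ‖Φ f‖ ≤ ‖f‖) (hPr : ∀ f : V → ℝ, ‖Pr f‖ ≤ ‖f‖)
    (Qhat : W → ℝ) (hQhat : Pr (TD (Φ Qhat)) = Qhat) :
    (∀ f g : W → ℝ, ‖Pr (TD (Φ f)) - Pr (TD (Φ g))‖ ≤ γ * ‖f - g‖) ∧
    ‖Φ Qhat - Qstar‖ ≤ (1 / (1 - γ)) * ‖Φ (Pr Qstar) - Qstar‖ := by
  obtain ⟨hγ0, hγ1⟩ := hγ
  set K : ℝ≥0 := ⟨γ, hγ0.le⟩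
  have hT : ContractingWith K TD := ⟨by exact_mod_cast hγ1, lipschitzWith_iff_norm_sub_le.2 hTD⟩
  have hΦ1 := AddMonoidHomClass.lipschitzWith_one_of_norm_le Φ hΦ
  have hPr1 := AddMonoidHomClass.lipschitzWith_one_of_norm_le Pr hPr
  refine ⟨lipschitzWith_iff_norm_sub_le.1 (by simpa using (hPr1.comp hT.2).comp hΦ1), ?_⟩
  have herr := hT.dist_projected_fixedPoint_le hPr1 hΦ1 hQstar hQhat
  rwa [dist_eq_norm, dist_eq_norm, ← one_div_mul_eq_div] at herr

theorem projected_bellman_fixed_point_error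
    {V W : Type*} [Fintype V] [Fintype W] [Nonempty V] [Nonempty W]
    (γ : ℝ) (hγ : γ ∈ Set.Ioo (0:ℝ) 1)
    (TD : (V → ℝ) → (V → ℝ))
    (hTD : ∀ f g : V → ℝ, ‖TD f - TD g‖ ≤ γ * ‖f - g‖)
    (Qstar : V → ℝ) (hQstar : TD Qstar = Qstar)
    (Φ : (W → ℝ) →ₗ[ℝ] (V → ℝ)) (Pr : (V → ℝ) →ₗ[ℝ] (W → ℝ))
    (hΦ : ∀ f : W → ℝ, ‖Φ f‖ ≤ ‖f‖) (hPr : ∀ f : V → ℝ, ‖Pr f‖ ≤ ‖f‖)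
    (Qhat : W → ℝ) (hQhat : Pr (TD (Φ Qhat)) = Qhat) :
    (∀ f g : W → ℝ, ‖Pr (TD (Φ f)) - Pr (TD (Φ g))‖ ≤ γ * ‖f - g‖) ∧
    ‖Φ Qhat - Qstar‖ ≤ (1 / (1 - γ)) * ‖Φ (Pr Qstar) - Qstar‖ :=
  projected_bellman_fixed_point_error_general γ hγ TD hTD Qstar hQstar Φ Pr hΦ hPr Qhat hQhat
end

section
/- Let σ ∈ (0,1], h > 0 with σh > 2, t₀ ≥ max(h, 4σh), and α_t = h/(t+t₀). Define β_{k,t} = α_k ∏_{ℓ=k+1}^{t−1} (1 − σα_ℓ). Then for all t ≥ 2, ∑_{k=1}^{t−1} β_{k,t}² ≤ (2h/σ) · 1/(t + t₀). -/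
/-!
Write `a = σh`. By Bernoulli's inequality each factor `1 - a/(ℓ+t₀)` is at most
`((ℓ-1+t₀)/(ℓ+t₀))^a`, so the product telescopes and
`β_{k,t}² ≤ h² (k+t₀)^(2a-2) / (t-1+t₀)^(2a)`. Comparing with an integral,
`∑_{k<t} (k+t₀)^(2a-2) ≤ (t+t₀)^(2a-1) / (2a-1)`, and since `t₀ ≥ 4a`,
`((t+t₀)/(t-1+t₀))^(2a) ≤ exp (2a/(t-1+t₀)) ≤ e < 3`. The claim then reduces to
`3a ≤ 2(2a-1)`, i.e. `a ≥ 2`.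
-/

open Real Finset

lemma prod_Ico_div_succ {G₀ : Type*} [CommGroupWithZero G₀] {f : ℕ → G₀} {m n : ℕ}
    (hf : ∀ k, m ≤ k → f k ≠ 0) (hmn : m ≤ n) :
    ∏ ℓ ∈ Ico m n, f ℓ / f (ℓ + 1) = f m / f n := by
  induction n, hmn using Nat.le_induction with
  | base => rw [Ico_self, prod_empty, div_self (hf m le_rfl)]
  | succ n hmn ih => rw [prod_Ico_succ_top hmn, ih, div_mul_div_cancel₀ (hf n hmn)]

lemma one_sub_div_le_rpow {a x : ℝ} (ha : 1 ≤ a) (hx : 1 ≤ x) :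
    1 - a / x ≤ ((x - 1) / x) ^ a := by
  have hs : -1 ≤ -x⁻¹ := neg_le_neg (inv_le_one_of_one_le₀ hx)
  convert one_add_mul_self_le_rpow_one_add hs ha using 2
  · ring
  · field_simp; ring

lemma prod_Ico_one_sub_div_le {a c : ℝ} (ha : 1 ≤ a) (hac : a ≤ c) {m n : ℕ} (hmn : m + 1 ≤ n) :
    ∏ ℓ ∈ Ico (m + 1) n, (1 - a / (ℓ + c)) ≤ ((m + c) / (n - 1 + c)) ^ a := by
  set f : ℕ → ℝ := fun n ↦ n - 1 + c
  have hf : ∀ k, m + 1 ≤ k → 0 < f k := by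
    intro k hk
    have : (m : ℝ) + 1 ≤ k := by exact_mod_cast hk
    simp only [f]
    linarith [(Nat.cast_nonneg m : (0 : ℝ) ≤ m)]
  calc ∏ ℓ ∈ Ico (m + 1) n, (1 - a / (ℓ + c))
      ≤ ∏ ℓ ∈ Ico (m + 1) n, (f ℓ / f (ℓ + 1)) ^ a := by
        refine prod_le_prod (fun ℓ _ ↦ ?_) (fun ℓ _ ↦ ?_)
        · have : (0 : ℝ) ≤ ℓ := Nat.cast_nonneg ℓ
          exact sub_nonneg.2 <| div_le_one_of_le₀ (by linarith) (by linarith)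
        · have : (0 : ℝ) ≤ ℓ := Nat.cast_nonneg ℓ
          have hfℓ : f ℓ / f (ℓ + 1) = (ℓ + c - 1) / (ℓ + c) := by
            simp only [f]
            push_cast
            ring_nf
          rw [hfℓ]
          exact one_sub_div_le_rpow ha (by linarith)
    _ = ((m + c) / (n - 1 + c)) ^ a := by
        rw [finsetProd_rpow _ _ (fun ℓ hℓ ↦ ?_), prod_Ico_div_succ (fun k hk ↦ (hf k hk).ne') hmn]
        · simp only [f]
          push_cast
          ring_nf
        · have hℓ := (mem_Ico.mp hℓ).1
          exact (div_pos (hf ℓ hℓ) (hf (ℓ + 1) (by omega))).le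

lemma sq_mul_prod_one_sub_div_le {a c h : ℝ} (ha : 1 ≤ a) (hac : a ≤ c) (hh : 0 ≤ h) {k t : ℕ}
    (hkt : k + 1 ≤ t) :
    (h / (k + c) * ∏ ℓ ∈ Ico (k + 1) t, (1 - a / (ℓ + c))) ^ 2 ≤
      h ^ 2 / (t - 1 + c) ^ (2 * a) * ((k : ℝ) + c) ^ (2 * a - 2) := by
  have hc : 0 < c := by linarith
  have hx : 0 < (k : ℝ) + c := by positivity
  have hT : 0 < (t : ℝ) - 1 + c := by
    have : (k : ℝ) + 1 ≤ t := by exact_mod_cast hkt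
    linarith
  have hprod : 0 ≤ ∏ ℓ ∈ Ico (k + 1) t, (1 - a / (ℓ + c)) :=
    prod_nonneg fun ℓ _ ↦ sub_nonneg.2 <|
      div_le_one_of_le₀ (by linarith [(Nat.cast_nonneg ℓ : (0 : ℝ) ≤ ℓ)]) (by positivity)
  calc (h / (k + c) * ∏ ℓ ∈ Ico (k + 1) t, (1 - a / (ℓ + c))) ^ 2
      ≤ (h / (k + c) * ((k + c) / (t - 1 + c)) ^ a) ^ 2 := by
        gcongr
        exact prod_Ico_one_sub_div_le ha hac hkt
    _ = h ^ 2 / (t - 1 + c) ^ (2 * a) * ((k : ℝ) + c) ^ (2 * a - 2) := by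
        rw [div_rpow hx.le hT.le, show 2 * a - 2 = (a - 1) * 2 by ring, mul_comm 2 a,
          rpow_mul hx.le, rpow_mul hT.le, rpow_two, rpow_two, rpow_sub_one hx.ne']
        field_simp

lemma sum_Ico_add_rpow_le {c q : ℝ} (hc : 0 ≤ c) (hq : 0 ≤ q) {m n : ℕ} (hmn : m ≤ n) :
    ∑ k ∈ Ico m n, ((k : ℝ) + c) ^ q ≤
      (((n : ℝ) + c) ^ (q + 1) - ((m : ℝ) + c) ^ (q + 1)) / (q + 1) := by
  have hmono : MonotoneOn (fun x : ℝ ↦ (x + c) ^ q) (Set.Icc m n) := fun x hx y _ hxy ↦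
    rpow_le_rpow (by linarith [hx.1, (Nat.cast_nonneg m : (0 : ℝ) ≤ m)]) (by linarith) hq
  calc ∑ k ∈ Ico m n, ((k : ℝ) + c) ^ q ≤ ∫ x in (m : ℝ)..n, (x + c) ^ q :=
        hmono.sum_le_integral_Ico hmn
    _ = _ := by
        rw [intervalIntegral.integral_comp_add_right (fun x ↦ x ^ q),
          integral_rpow (Or.inl (by linarith))]

lemma add_one_rpow_le_exp_mul_rpow {x b : ℝ} (hx : 0 < x) (hb : 0 ≤ b) :
    (x + 1) ^ b ≤ exp (b / x) * x ^ b := by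
  have hsplit : x + 1 = (1 + x⁻¹) * x := by field_simp
  rw [hsplit, mul_rpow (by positivity) hx.le, div_eq_inv_mul, exp_mul]
  gcongr
  linarith [add_one_le_exp x⁻¹]

lemma add_one_rpow_le_three_mul_rpow {x b : ℝ} (hb : 0 ≤ b) (hbx : b ≤ x) (hx : 0 < x) :
    (x + 1) ^ b ≤ 3 * x ^ b := by
  calc (x + 1) ^ b ≤ exp (b / x) * x ^ b := add_one_rpow_le_exp_mul_rpow hx hb
    _ ≤ exp 1 * x ^ b := by gcongr; exact (div_le_one hx).2 hbx
    _ ≤ 3 * x ^ b := by gcongr; exact exp_one_lt_three.le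
lemma sq_div_rpow_mul_rpow_le {a h x : ℝ} (ha : 2 ≤ a) (hax : 2 * a ≤ x) :
    h ^ 2 / x ^ (2 * a) * ((x + 1) ^ (2 * a - 1) / (2 * a - 1)) ≤ 2 * h ^ 2 / (a * (x + 1)) := by
  have hx : 0 < x := by linarith
  have hden : 0 < (x + 1) * (2 * a - 1) := mul_pos (by linarith) (by linarith)
  calc h ^ 2 / x ^ (2 * a) * ((x + 1) ^ (2 * a - 1) / (2 * a - 1))
      = h ^ 2 / ((x + 1) * (2 * a - 1)) * ((x + 1) ^ (2 * a) / x ^ (2 * a)) := by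
        rw [rpow_sub_one (by linarith)]
        field_simp
    _ ≤ h ^ 2 / ((x + 1) * (2 * a - 1)) * 3 := by
        gcongr
        exact (div_le_iff₀ (by positivity)).2 (add_one_rpow_le_three_mul_rpow (by linarith) hax hx)
    _ ≤ 2 * h ^ 2 / (a * (x + 1)) := by
        rw [div_mul_eq_mul_div, div_le_div_iff₀ hden (by positivity)]
        nlinarith [mul_nonneg (mul_nonneg (sq_nonneg h) hx.le) (by linarith : 0 ≤ a - 2)]

theorem stepsize_sum_of_squares_bound
    (σ h t₀ : ℝ) (hσ : σ ∈ Set.Ioc (0:ℝ) 1) (hh : 0 < h)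
    (hσh : 2 < σ * h) (ht₀ : max h (4 * σ * h) ≤ t₀)
    (α : ℕ → ℝ) (hα : ∀ t : ℕ, α t = h / (t + t₀))
    (β : ℕ → ℕ → ℝ)
    (hβ : ∀ k t : ℕ, β k t = α k * ∏ ℓ ∈ Finset.Ico (k + 1) t, (1 - σ * α ℓ)) :
    ∀ t : ℕ, 2 ≤ t →
      ∑ k ∈ Finset.Ico 1 t, (β k t) ^ 2 ≤ (2 * h / σ) * (1 / ((t : ℝ) + t₀)) := by
  intro t ht
  set a := σ * h with ha
  have hat₀ : 4 * a ≤ t₀ := by linarith [le_of_max_le_right ht₀]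
  have ht : (2 : ℝ) ≤ t := by exact_mod_cast ht
  set T : ℝ := t - 1 + t₀
  have hT : 0 < T := by linarith
  have hterm (k : ℕ) (hk : k ∈ Ico 1 t) :
      β k t ^ 2 ≤ h ^ 2 / T ^ (2 * a) * ((k : ℝ) + t₀) ^ (2 * a - 2) := by
    simp only [hβ, hα, ← mul_div_assoc]
    exact sq_mul_prod_one_sub_div_le (by linarith) (by linarith) hh.le (mem_Ico.mp hk).2
  have hsum :
      ∑ k ∈ Ico 1 t, ((k : ℝ) + t₀) ^ (2 * a - 2) ≤ (T + 1) ^ (2 * a - 1) / (2 * a - 1) := by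
    have := sum_Ico_add_rpow_le (c := t₀) (q := 2 * a - 2) (by linarith) (by linarith)
      (by omega : 1 ≤ t)
    rw [show 2 * a - 2 + 1 = 2 * a - 1 by ring, show (t : ℝ) + t₀ = T + 1 by ring] at this
    refine this.trans (div_le_div_of_nonneg_right (sub_le_self _ (rpow_nonneg ?_ _)) (by linarith))
    push_cast
    linarith
  calc ∑ k ∈ Ico 1 t, β k t ^ 2
      ≤ h ^ 2 / T ^ (2 * a) * ∑ k ∈ Ico 1 t, ((k : ℝ) + t₀) ^ (2 * a - 2) := by
        rw [mul_sum]
        exact sum_le_sum hterm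
    _ ≤ h ^ 2 / T ^ (2 * a) * ((T + 1) ^ (2 * a - 1) / (2 * a - 1)) := by gcongr
    _ ≤ 2 * h ^ 2 / (a * (T + 1)) := sq_div_rpow_mul_rpow_le hσh.le (by linarith)
    _ = 2 * h / σ * (1 / ((t : ℝ) + t₀)) := by
        have : σ ≠ 0 := hσ.1.ne'
        rw [show (t : ℝ) + t₀ = T + 1 by ring, ha]
        field_simp
end

section
/- Let σ ∈ (0,1], h > 0, τ ∈ ℕ with τ ≥ 1, t₀ ≥ max(h, 4σh, τ), σh > 2, and α_t = h/(t+t₀). With β_{k,t} = α_k ∏_{ℓ=k+1}^{t−1}(1−σα_ℓ), it holds for all t > τ that ∑_{k=τ}^{t−1} β_{k,t} ∑_{ℓ=k−τ+1}^{k−1} α_ℓ ≤ (8hτ/σ) · 1/(t+t₀). -/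
/-!
Write `S t` for the left-hand side and `x = t + t₀`. Splitting off the last factor of each
product gives the recursion `S (t + 1) = (1 - σ α t) S t + α t w t`, where `w t` is the window
sum, and `w t ≤ 2 τ h / x`. With `C = 8 h τ / σ`, the sequence `C / x` is a supersolution of this
recursion as soon as `σ h ≥ 4 / 3` (since `2 τ h² = C σ h / 4`), so induction from the empty sum
`S τ = 0` gives the bound.
-/

open Finset

lemma sum_window_div_le {h t₀ : ℝ} {τ k : ℕ} (hh : 0 ≤ h) (hτ : (τ : ℝ) ≤ t₀) (hk : τ ≤ k) :
    ∑ ℓ ∈ Ico (k - τ + 1) k, h / (ℓ + t₀) ≤ 2 * τ * h / (k + t₀) := by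
  have hterm : ∀ ℓ ∈ Ico (k - τ + 1) k, h / (ℓ + t₀) ≤ 2 * h / (k + t₀) := by
    intro ℓ hℓ
    have hℓ' : (k : ℝ) + 1 ≤ ℓ + τ := by exact_mod_cast (by grind : k + 1 ≤ ℓ + τ)
    have hℓk : (ℓ : ℝ) + 1 ≤ k := by exact_mod_cast (by grind : ℓ + 1 ≤ k)
    have hkτ : (τ : ℝ) ≤ k := by exact_mod_cast hk
    have : (0 : ℝ) ≤ ℓ := ℓ.cast_nonneg
    rw [div_le_div_iff₀ (by linarith) (by linarith)]
    nlinarith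
  calc ∑ ℓ ∈ Ico (k - τ + 1) k, h / (ℓ + t₀)
      ≤ #(Ico (k - τ + 1) k) • (2 * h / (k + t₀)) := sum_le_card_nsmul _ _ _ hterm
    _ ≤ τ • (2 * h / (k + t₀)) := by
      gcongr
      · have : (0 : ℝ) ≤ τ := τ.cast_nonneg
        exact div_nonneg (by linarith) (by linarith [(k.cast_nonneg : (0 : ℝ) ≤ k)])
      · simp only [Nat.card_Ico]; omega
    _ = 2 * τ * h / (k + t₀) := by rw [nsmul_eq_mul]; ring

lemma sum_mul_prod_Ico_succ (a f w : ℕ → ℝ) {τ t : ℕ} (ht : τ ≤ t) :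
    ∑ k ∈ Ico τ (t + 1), a k * (∏ ℓ ∈ Ico (k + 1) (t + 1), f ℓ) * w k =
      f t * ∑ k ∈ Ico τ t, a k * (∏ ℓ ∈ Ico (k + 1) t, f ℓ) * w k + a t * w t := by
  rw [sum_Ico_succ_top ht, Ico_self, prod_empty, mul_one, mul_sum]
  congr 1
  refine sum_congr rfl fun k hk => ?_
  rw [prod_Ico_succ_top (by grind)]
  ring

lemma one_sub_mul_add_le_of_le {σ h x S w : ℝ} {τ : ℕ} (hσ : 0 < σ) (hσh : 4 / 3 ≤ σ * h)
    (hx : σ * h ≤ x) (hS : S ≤ 8 * h * τ / σ * (1 / x)) (hw : w ≤ 2 * τ * h / x) :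
    (1 - σ * (h / x)) * S + h / x * w ≤ 8 * h * τ / σ * (1 / (x + 1)) := by
  have hx0 : 0 < x := by linarith
  have hh : 0 < h := pos_of_mul_pos_right (by linarith) hσ.le
  have hfactor : 0 ≤ 1 - σ * (h / x) := by
    rw [← mul_div_assoc, sub_nonneg, div_le_one hx0]; exact hx
  calc (1 - σ * (h / x)) * S + h / x * w
      ≤ (1 - σ * (h / x)) * (8 * h * τ / σ * (1 / x)) + h / x * (2 * τ * h / x) := by
        gcongr
    _ ≤ 8 * h * τ / σ * (1 / (x + 1)) := by
      have hgap : 8 * h * τ / σ * (1 / (x + 1)) -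
          ((1 - σ * (h / x)) * (8 * h * τ / σ * (1 / x)) + h / x * (2 * τ * h / x)) =
            2 * h * τ * ((3 * (σ * h) - 4) * x + 3 * (σ * h)) / (σ * x ^ 2 * (x + 1)) := by
        have : x + 1 ≠ 0 := by linarith
        field_simp
        ring
      have hnum : 0 ≤ 2 * h * τ * ((3 * (σ * h) - 4) * x + 3 * (σ * h)) := by
        have : 0 ≤ (3 * (σ * h) - 4) * x := mul_nonneg (by linarith) hx0.le
        positivity
      rw [← sub_nonneg, hgap]
      exact div_nonneg hnum (by positivity)

theorem stepsize_window_sum_bound_general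
    (σ h t₀ : ℝ) (τ : ℕ) (hσ : σ ∈ Set.Ioc (0:ℝ) 1)
    (hσh : 2 < σ * h)
    (ht₀ : max h (max (4 * σ * h) (τ : ℝ)) ≤ t₀)
    (α : ℕ → ℝ) (hα : ∀ t : ℕ, α t = h / (t + t₀))
    (β : ℕ → ℕ → ℝ)
    (hβ : ∀ k t : ℕ, β k t = α k * ∏ ℓ ∈ Finset.Ico (k + 1) t, (1 - σ * α ℓ)) :
    ∀ t : ℕ, τ < t →
      ∑ k ∈ Finset.Ico τ t, β k t * (∑ ℓ ∈ Finset.Ico (k - τ + 1) k, α ℓ) ≤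
        (8 * h * τ / σ) * (1 / ((t : ℝ) + t₀)) := by
  obtain ⟨hσ0, -⟩ := hσ
  have hx : ∀ n : ℕ, σ * h ≤ n + t₀ := fun n => by
    have : σ * h ≤ t₀ := by grind
    linarith [(n.cast_nonneg : (0 : ℝ) ≤ n)]
  have hh : 0 ≤ h := (pos_of_mul_pos_right (by linarith) hσ0.le).le
  simp only [hβ, hα]
  intro t ht
  replace ht := ht.le
  induction t, ht using Nat.le_induction with
  | base =>
    rw [Ico_self, sum_empty]
    exact mul_nonneg (by positivity) (one_div_nonneg.mpr (by linarith [hx τ]))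
  | succ t ht ih =>
    rw [sum_mul_prod_Ico_succ _ _ _ ht]
    push_cast
    rw [add_right_comm]
    exact one_sub_mul_add_le_of_le hσ0 (by linarith) (hx t) ih (sum_window_div_le hh (by grind) ht)

theorem stepsize_window_sum_bound
    (σ h t₀ : ℝ) (τ : ℕ) (hσ : σ ∈ Set.Ioc (0:ℝ) 1) (hh : 0 < h)
    (hτ : 1 ≤ τ) (hσh : 2 < σ * h)
    (ht₀ : max h (max (4 * σ * h) (τ : ℝ)) ≤ t₀)
    (α : ℕ → ℝ) (hα : ∀ t : ℕ, α t = h / (t + t₀))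
    (β : ℕ → ℕ → ℝ)
    (hβ : ∀ k t : ℕ, β k t = α k * ∏ ℓ ∈ Finset.Ico (k + 1) t, (1 - σ * α ℓ)) :
    ∀ t : ℕ, τ < t →
      ∑ k ∈ Finset.Ico τ t, β k t * (∑ ℓ ∈ Finset.Ico (k - τ + 1) k, α ℓ) ≤
        (8 * h * τ / σ) * (1 / ((t : ℝ) + t₀)) :=
  stepsize_window_sum_bound_general σ h t₀ τ hσ hσh ht₀ α hα β hβ
end

section
/- Let γ ∈ (0,1), ω ∈ (0,1], σ ∈ (0,1], h > 0 with σh(1−√γ) ≥ 1, t₀ ≥ 1, and α_t = h/(t+t₀) with α_0 ≤ 1/2. Let (d_k)_{k≥0} be any sequence with d_k ∈ [σ, 1], and define b_{k,t} = α_k d_k ∏_{ℓ=k+1}^{t−1}(1 − α_ℓ d_ℓ). Then for all integers t > τ ≥ 0, ∑_{k=τ}^{t−1} b_{k,t} / (k+t₀)^ω ≤ 1/(√γ · (t+t₀)^ω). -/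
/-!
Write `p t = α t * d t`. The weighted sum `e t = ∑_{τ ≤ k < t} b k t / (k + t₀) ^ ω` satisfies
`e (t + 1) = (1 - p t) * e t + p t / (t + t₀) ^ ω`, and `e τ = 0`. As `p t ≤ 1`, the recursion is monotone, so it suffices that the bound
`B t = 1 / (√γ (t + t₀) ^ ω)` is a supersolution of this recursion. Dividing out, this amounts to
`(1 - p t (1 - √γ)) (1 + 1 / (t + t₀)) ^ ω ≤ 1`, which holds because `p t (1 - √γ) (t + t₀) ≥ 1`
and `(1 + 1 / x) ^ ω ≤ 1 + 1 / x` for `ω ≤ 1`.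
-/

open Finset

section DiscountedSum

variable {R : Type*} [CommRing R]

def discountedSum (p w : ℕ → R) (τ t : ℕ) : R :=
  ∑ k ∈ Ico τ t, p k * (∏ ℓ ∈ Ico (k + 1) t, (1 - p ℓ)) * w k

theorem discountedSum_self (p w : ℕ → R) (τ : ℕ) : discountedSum p w τ τ = 0 := by
  simp [discountedSum]

theorem discountedSum_succ (p w : ℕ → R) {τ t : ℕ} (ht : τ ≤ t) :
    discountedSum p w τ (t + 1) = (1 - p t) * discountedSum p w τ t + p t * w t := by
  unfold discountedSum
  rw [sum_Ico_succ_top ht, mul_sum, Ico_self, prod_empty, mul_one]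
  congr 1
  refine sum_congr rfl fun k hk => ?_
  rw [prod_Ico_succ_top (mem_Ico.1 hk).2]
  ring

theorem discountedSum_le [LinearOrder R] [IsStrictOrderedRing R] {p w B : ℕ → R} {τ : ℕ}
    (hp : ∀ t, τ ≤ t → p t ≤ 1) (hB : 0 ≤ B τ)
    (hstep : ∀ t, τ ≤ t → (1 - p t) * B t + p t * w t ≤ B (t + 1)) {t : ℕ} (ht : τ ≤ t) :
    discountedSum p w τ t ≤ B t := by
  induction t, ht using Nat.le_induction with
  | base => rwa [discountedSum_self]
  | succ t ht ih =>
    rw [discountedSum_succ p w ht]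
    have : (1 - p t) * discountedSum p w τ t ≤ (1 - p t) * B t :=
      mul_le_mul_of_nonneg_left ih (sub_nonneg.2 (hp t ht))
    linarith [hstep t ht]

end DiscountedSum

namespace Real

theorem mul_rpow_le_mul_rpow_of_le {x y ω : ℝ} (hx : 0 < x) (hxy : x ≤ y) (hω : ω ≤ 1) :
    x * y ^ ω ≤ y * x ^ ω := by
  have hy : 0 < y := hx.trans_le hxy
  have key : y ^ (ω - 1) ≤ x ^ (ω - 1) := rpow_le_rpow_of_nonpos hx hxy (by linarith)
  rw [rpow_sub_one hy.ne', rpow_sub_one hx.ne', div_le_div_iff₀ hy hx] at key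
  linarith

/-- The supersolution step for `B t = 1 / (√γ (t + t₀) ^ ω)`, with `A = √γ` and `x = t + t₀`. -/
theorem one_sub_mul_div_add_mul_div_rpow_le {A ω x p : ℝ} (hA : 0 < A) (hω : ω ≤ 1) (hx : 0 < x)
    (hpx : 1 ≤ p * (1 - A) * x) :
    (1 - p) * (1 / (A * x ^ ω)) + p * (1 / x ^ ω) ≤ 1 / (A * (x + 1) ^ ω) := by
  set c := p * (1 - A)
  have hxω : 0 < x ^ ω := rpow_pos_of_pos hx ω
  have hx1ω : 0 < (x + 1) ^ ω := rpow_pos_of_pos (by linarith) ω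
  have hconcave : x * (x + 1) ^ ω ≤ (x + 1) * x ^ ω :=
    mul_rpow_le_mul_rpow_of_le hx (by linarith) hω
  have hc : (1 - c) * (x + 1) ≤ x := by nlinarith
  have hcω : (1 - c) * (x + 1) ^ ω ≤ x ^ ω := by
    have := mul_le_mul_of_nonneg_right hc hx1ω.le
    nlinarith
  have hlhs : (1 - p) * (1 / (A * x ^ ω)) + p * (1 / x ^ ω) = (1 - c) / (A * x ^ ω) := by
    field_simp
    ring
  rw [hlhs, div_le_div_iff₀ (by positivity) (by positivity)]
  nlinarith [mul_le_mul_of_nonneg_left hcω hA.le]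

end Real

theorem weighted_stepsize_decay_bound_general
    (γ ω σ h t₀ : ℝ) (hγ : γ ∈ Set.Ioo (0:ℝ) 1) (hω : ω ∈ Set.Ioc (0:ℝ) 1)
    (hh : 0 < h)
    (hσh : 1 ≤ σ * h * (1 - Real.sqrt γ)) (ht₀ : 1 ≤ t₀)
    (α : ℕ → ℝ) (hα : ∀ t : ℕ, α t = h / (t + t₀)) (hα0 : α 0 ≤ 1 / 2)
    (d : ℕ → ℝ) (hd : ∀ k, d k ∈ Set.Icc σ 1)
    (b : ℕ → ℕ → ℝ)
    (hb : ∀ k t : ℕ, b k t = α k * d k * ∏ ℓ ∈ Finset.Ico (k + 1) t, (1 - α ℓ * d ℓ)) :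
    ∀ τ t : ℕ, τ < t →
      ∑ k ∈ Finset.Ico τ t, b k t / (((k : ℝ) + t₀) ^ ω) ≤
        1 / (Real.sqrt γ * ((t : ℝ) + t₀) ^ ω) := by
  intro τ t hτt
  have hx : ∀ t : ℕ, 0 < (t : ℝ) + t₀ := fun t => by
    linarith [(Nat.cast_nonneg t : (0 : ℝ) ≤ t)]
  have hsqrt : 0 < Real.sqrt γ := Real.sqrt_pos.2 hγ.1
  have hα_nonneg : ∀ t, 0 ≤ α t := fun t => by rw [hα]; exact div_nonneg hh.le (hx t).le
  have hp_le : ∀ t, α t * d t ≤ 1 := fun t => by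
    have hαt : α t ≤ α 0 := by
      rw [hα, hα]
      exact div_le_div_of_nonneg_left hh.le (by simpa using hx 0) (by simp)
    nlinarith [(hd t).2, hα_nonneg t]
  have hp_large : ∀ t, 1 ≤ α t * d t * (1 - Real.sqrt γ) * ((t : ℝ) + t₀) := fun t => by
    have hA : Real.sqrt γ ≤ 1 := Real.sqrt_le_one.2 hγ.2.le
    rw [hα, show h / ((t : ℝ) + t₀) * d t * (1 - Real.sqrt γ) * ((t : ℝ) + t₀) =
      d t * h * (1 - Real.sqrt γ) by field_simp [(hx t).ne']]
    nlinarith [(hd t).1, mul_nonneg hh.le (sub_nonneg.2 hA)]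
  have hsum : ∑ k ∈ Finset.Ico τ t, b k t / (((k : ℝ) + t₀) ^ ω) =
      discountedSum (fun t => α t * d t) (fun k => 1 / ((k : ℝ) + t₀) ^ ω) τ t := by
    refine sum_congr rfl fun k _ => ?_
    rw [hb, div_eq_mul_one_div]
  rw [hsum]
  refine discountedSum_le (B := fun t : ℕ => 1 / (Real.sqrt γ * ((t : ℝ) + t₀) ^ ω))
    (fun t _ => hp_le t)
    (one_div_nonneg.2 (mul_nonneg hsqrt.le (Real.rpow_nonneg (hx τ).le ω))) (fun t _ => ?_) hτt.le
  simpa [add_right_comm] using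
    Real.one_sub_mul_div_add_mul_div_rpow_le hsqrt hω.2 (hx t) (hp_large t)

theorem weighted_stepsize_decay_bound
    (γ ω σ h t₀ : ℝ) (hγ : γ ∈ Set.Ioo (0:ℝ) 1) (hω : ω ∈ Set.Ioc (0:ℝ) 1)
    (hσ : σ ∈ Set.Ioc (0:ℝ) 1) (hh : 0 < h)
    (hσh : 1 ≤ σ * h * (1 - Real.sqrt γ)) (ht₀ : 1 ≤ t₀)
    (α : ℕ → ℝ) (hα : ∀ t : ℕ, α t = h / (t + t₀)) (hα0 : α 0 ≤ 1 / 2)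
    (d : ℕ → ℝ) (hd : ∀ k, d k ∈ Set.Icc σ 1)
    (b : ℕ → ℕ → ℝ)
    (hb : ∀ k t : ℕ, b k t = α k * d k * ∏ ℓ ∈ Finset.Ico (k + 1) t, (1 - α ℓ * d ℓ)) :
    ∀ τ t : ℕ, τ < t →
      ∑ k ∈ Finset.Ico τ t, b k t / (((k : ℝ) + t₀) ^ ω) ≤
        1 / (Real.sqrt γ * ((t : ℝ) + t₀) ^ ω) :=
  weighted_stepsize_decay_bound_general γ ω σ h t₀ hγ hω hh hσh ht₀ α hα hα0 d hd b hb
end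

section
/- Let (Ω, F, P) be a probability space with filtration (F_t)_{t≥0}, and let (X_t)_{t≥0} be an (F_t)-adapted real process such that E[X_t | F_{t−τ}] = 0 for all t ≥ τ (with τ ≥ 1 a fixed integer, and F_s trivial for s < 0), and |X_t| ≤ X̄_t almost surely for deterministic constants X̄_t. Then for any t and δ ∈ (0,1), with probability at least 1−δ, |∑_{k=0}^t X_k| ≤ sqrt(2τ ∑_{k=0}^t X̄_k² · log(2τ/δ)). -/
/-
For each residue `r` modulo `τ`, the subsequence `X r, X (r + τ), X (r + 2τ), …` is a genuine
martingale difference sequence for the filtration `F r ≤ F (r + τ) ≤ …`: the hypothesis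
`E[X t | F (t - τ)] = 0` says exactly this. The conditional Hoeffding lemma (bound `exp (t * Y)`
by its chord over `[-c, c]`, which is affine in `Y`) and the usual induction make each residue
sum `S r` sub-Gaussian with variance proxy `V r = ∑ Xbar²` over its indices, so by Chernoff
`|S r| ≤ √(2 V r log (2τ/δ))` outside an event of probability `δ/τ`. On the intersection of these
`τ` events, `∑ √(a r) ≤ √(τ ∑ a r)` (Cauchy–Schwarz) bounds `|∑ X k| = |∑ S r|`, and the union
bound leaves probability at least `1 - δ`.
-/

open MeasureTheory ProbabilityTheory Real Finset
open scoped NNReal ENNReal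

theorem Finset.sum_range_eq_sum_residues {M : Type*} [AddCommMonoid M] (f : ℕ → M) {τ : ℕ}
    (hτ : 0 < τ) (N : ℕ) :
    ∑ k ∈ range N, f k = ∑ r ∈ range τ, ∑ i ∈ range ((N - r) ⌈/⌉ τ), f (r + τ * i) := by
  have hcount : ∀ r i, i < (N - r) ⌈/⌉ τ ↔ r + τ * i < N := fun r i => by
    rw [← not_le, ceilDiv_le_iff_le_mul hτ]; omega
  rw [sum_sigma']
  refine sum_nbij' (fun k => ⟨k % τ, k / τ⟩) (fun p => p.1 + τ * p.2) ?_ ?_ ?_ ?_ ?_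
  · intro k hk
    simp only [mem_range, mem_sigma, hcount, Nat.mod_add_div] at hk ⊢
    exact ⟨Nat.mod_lt k hτ, hk⟩
  · rintro ⟨r, i⟩ hp
    simp only [mem_sigma, mem_range, hcount] at hp ⊢
    exact hp.2
  · intro k _
    exact Nat.mod_add_div k τ
  · rintro ⟨r, i⟩ hp
    simp only [mem_sigma, mem_range] at hp
    simp [Nat.add_mul_div_left _ _ hτ, Nat.div_eq_of_lt hp.1, Nat.mod_eq_of_lt hp.1]
  · intro k _
    simp only [Nat.mod_add_div]

theorem Finset.abs_sum_le_sqrt_card_mul_sum {ι : Type*} (s : Finset ι) {a v : ι → ℝ}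
    (h : ∀ i ∈ s, |a i| ≤ √(v i)) (hv : ∀ i ∈ s, 0 ≤ v i) :
    |∑ i ∈ s, a i| ≤ √(#s * ∑ i ∈ s, v i) :=
  calc |∑ i ∈ s, a i| ≤ ∑ i ∈ s, √(v i) := (abs_sum_le_sum_abs _ _).trans (sum_le_sum h)
    _ ≤ √(#s * ∑ i ∈ s, v i) := by
        refine le_sqrt_of_sq_le (sq_sum_le_card_mul_sum_sq.trans_eq ?_)
        rw [sum_congr rfl fun i hi => sq_sqrt (hv i hi)]

theorem Real.exp_mul_le_cosh_add_div_mul_sinh {y c : ℝ} (h : |y| ≤ c) (t : ℝ) :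
    exp (t * y) ≤ cosh (t * c) + y / c * sinh (t * c) := by
  rcases ((abs_nonneg y).trans h).eq_or_lt with rfl | hc
  · simp [abs_nonpos_iff.1 h]
  obtain ⟨hyl, hyu⟩ := abs_le.1 h
  have hconv := convexOn_exp.2 (Set.mem_univ (-(t * c))) (Set.mem_univ (t * c))
    (div_nonneg (by linarith) (by linarith) : 0 ≤ (c - y) / (2 * c))
    (div_nonneg (by linarith) (by linarith) : 0 ≤ (c + y) / (2 * c)) (by field_simp; ring)
  simp only [smul_eq_mul] at hconv
  have hcomb : (c - y) / (2 * c) * -(t * c) + (c + y) / (2 * c) * (t * c) = t * y := by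
    field_simp; ring
  rw [hcomb] at hconv
  refine hconv.trans_eq ?_
  rw [cosh_eq, sinh_eq]
  field_simp
  ring

section

variable {Ω : Type*} {m m0 : MeasurableSpace Ω} {μ : Measure Ω}

theorem MeasureTheory.condExp_exp_mul_le_of_abs_le [IsFiniteMeasure μ] (hm : m ≤ m0)
    {Y : Ω → ℝ} {c : ℝ} (hY : AEMeasurable Y μ) (hbd : ∀ᵐ ω ∂μ, |Y ω| ≤ c) (hcond : μ[Y|m] =ᵐ[μ] 0)
    (t : ℝ) : μ[fun ω => exp (t * Y ω)|m] ≤ᵐ[μ] fun _ => exp (c ^ 2 * t ^ 2 / 2) := by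
  have hbd' : ∀ᵐ ω ∂μ, Y ω ∈ Set.Icc (-c) c := by filter_upwards [hbd] with ω h using abs_le.1 h
  have hYint : Integrable Y μ := Integrable.of_mem_Icc (-c) c hY hbd'
  set g : Ω → ℝ := (fun _ => cosh (t * c)) + (sinh (t * c) / c) • Y with hg
  have hg_condExp : μ[g|m] =ᵐ[μ] fun _ => cosh (t * c) :=
    calc μ[g|m] =ᵐ[μ] μ[fun _ => cosh (t * c)|m] + μ[(sinh (t * c) / c) • Y|m] :=
          condExp_add (integrable_const _) (hYint.smul _) m
      _ =ᵐ[μ] (fun _ => cosh (t * c)) + (sinh (t * c) / c) • μ[Y|m] := by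
          rw [condExp_const hm]
          exact (condExp_smul _ _ m).add_left
      _ =ᵐ[μ] fun _ => cosh (t * c) := by
          filter_upwards [hcond] with ω hω
          simp [hω]
  have hle_g : (fun ω => exp (t * Y ω)) ≤ᵐ[μ] g := by
    filter_upwards [hbd] with ω hω
    simpa [hg, div_mul_comm] using exp_mul_le_cosh_add_div_mul_sinh hω t
  filter_upwards [condExp_mono (integrable_exp_mul_of_mem_Icc hY hbd')
    ((integrable_const _).add (hYint.smul _)) hle_g, hg_condExp] with ω h₁ h₂
  calc _ ≤ cosh (t * c) := h₁.trans_eq h₂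
    _ ≤ exp ((t * c) ^ 2 / 2) := cosh_le_exp_half_sq _
    _ = exp (c ^ 2 * t ^ 2 / 2) := by ring_nf

theorem ProbabilityTheory.HasSubgaussianMGF.add_of_condExp_eq_zero [IsFiniteMeasure μ]
    (hm : m ≤ m0) {S Y : Ω → ℝ} {cS c : ℝ≥0} (hS : HasSubgaussianMGF S cS μ)
    (hSm : StronglyMeasurable[m] S) (hY : AEMeasurable Y μ) (hbd : ∀ᵐ ω ∂μ, |Y ω| ≤ c)
    (hcond : μ[Y|m] =ᵐ[μ] 0) :
    HasSubgaussianMGF (fun ω => S ω + Y ω) (cS + c ^ 2) μ := by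
  have hexp_add (t : ℝ) : (fun ω => exp (t * (S ω + Y ω)))
      = (fun ω => exp (t * S ω)) * fun ω => exp (t * Y ω) := by
    ext ω; simp [mul_add, exp_add]
  have hexp_int (t : ℝ) : Integrable (fun ω => exp (t * (S ω + Y ω))) μ := by
    rw [hexp_add]
    refine (hS.integrable_exp_mul t).mul_bdd (c := exp (|t| * c))
      (continuous_exp.comp_aestronglyMeasurable (hY.aestronglyMeasurable.const_mul t)) ?_
    filter_upwards [hbd] with ω hω
    rw [norm_eq_abs, abs_exp, exp_le_exp]
    exact (le_abs_self _).trans ((abs_mul _ _).trans_le (by gcongr))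
  refine ⟨hexp_int, fun t => ?_⟩
  have hpull : μ[fun ω => exp (t * (S ω + Y ω))|m]
      =ᵐ[μ] fun ω => exp (t * S ω) * (μ[fun ω => exp (t * Y ω)|m]) ω := by
    rw [hexp_add]
    exact condExp_mul_of_stronglyMeasurable_left
      (continuous_exp.comp_stronglyMeasurable (hSm.const_mul t)) (hexp_add t ▸ hexp_int t)
      (integrable_exp_mul_of_mem_Icc hY (a := -c) (b := c)
        (by filter_upwards [hbd] with ω h using abs_le.1 h))
  calc mgf (fun ω => S ω + Y ω) μ t
      = ∫ ω, exp (t * S ω) * (μ[fun ω => exp (t * Y ω)|m]) ω ∂μ := by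
        rw [mgf, ← integral_condExp hm]
        exact integral_congr_ae hpull
    _ ≤ ∫ ω, exp (t * S ω) * exp (c ^ 2 * t ^ 2 / 2) ∂μ := by
        refine integral_mono_ae (integrable_condExp.congr hpull)
          ((hS.integrable_exp_mul t).mul_const _) ?_
        filter_upwards [condExp_exp_mul_le_of_abs_le hm hY hbd hcond t] with ω hω
        exact mul_le_mul_of_nonneg_left hω (exp_pos _).le
    _ = mgf S μ t * exp (c ^ 2 * t ^ 2 / 2) := by rw [integral_mul_const, mgf]
    _ ≤ exp (cS * t ^ 2 / 2) * exp (c ^ 2 * t ^ 2 / 2) := by gcongr; exact hS.mgf_le t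
    _ = exp (↑(cS + c ^ 2) * t ^ 2 / 2) := by rw [← exp_add]; push_cast; ring_nf

theorem ProbabilityTheory.hasSubgaussianMGF_sum_of_condExp_eq_zero [IsProbabilityMeasure μ]
    {ℱ : Filtration ℕ m0} {Y : ℕ → Ω → ℝ} {c : ℕ → ℝ≥0} (hY : StronglyAdapted ℱ Y)
    (h0 : μ[Y 0] = 0) (hcond : ∀ i, μ[Y (i + 1)|ℱ i] =ᵐ[μ] 0)
    (hbd : ∀ i, ∀ᵐ ω ∂μ, |Y i ω| ≤ c i) (n : ℕ) :
    HasSubgaussianMGF (fun ω => ∑ i ∈ range n, Y i ω) (∑ i ∈ range n, c i ^ 2) μ := by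
  have hYm (i : ℕ) : AEMeasurable (Y i) μ :=
    ((hY i).mono (ℱ.le i)).measurable.aemeasurable
  induction n with
  | zero => simp
  | succ n ih =>
    simp_rw [sum_range_succ]
    rcases n with _ | n
    · refine ih.add_of_condExp_eq_zero bot_le (by simp [stronglyMeasurable_const])
        (hYm 0) (hbd 0) ?_
      simp only [condExp_bot', h0, smul_zero]
      rfl
    · refine ih.add_of_condExp_eq_zero (ℱ.le n) ?_ (hYm _) (hbd _) (hcond n)
      exact Finset.stronglyMeasurable_fun_sum _ fun i hi =>
        (hY i).mono (ℱ.mono (Nat.lt_succ_iff.1 (mem_range.1 hi)))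

theorem ProbabilityTheory.HasSubgaussianMGF.measure_sqrt_lt_abs_le [IsFiniteMeasure μ]
    {X : Ω → ℝ} {c : ℝ≥0} (h : HasSubgaussianMGF X c μ) {δ : ℝ} (hδ : 0 < δ) (hδ2 : δ ≤ 2) :
    μ {ω | √(2 * c * log (2 / δ)) < |X ω|} ≤ ENNReal.ofReal δ := by
  rcases eq_zero_or_pos c with rfl | hc
  · refine le_of_eq_of_le (measure_mono_null (fun ω hω => ?_)
      (ae_iff.1 h.ae_eq_zero_of_hasSubgaussianMGF_zero)) zero_le
    simp_all
  have hL : 0 ≤ log (2 / δ) := log_nonneg (by rw [le_div_iff₀ hδ]; linarith)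
  set ε := √(2 * c * log (2 / δ))
  have htail {Z : Ω → ℝ} (hZ : HasSubgaussianMGF Z c μ) :
      μ {ω | ε ≤ Z ω} ≤ ENNReal.ofReal (δ / 2) := by
    rw [← ofReal_measureReal]
    refine ENNReal.ofReal_le_ofReal ((hZ.measure_ge_le (sqrt_nonneg _)).trans_eq ?_)
    rw [sq_sqrt (by positivity), show -(2 * c * log (2 / δ)) / (2 * c) = -log (2 / δ) by
      field_simp, exp_neg, exp_log (by positivity), inv_div]
  calc μ {ω | ε < |X ω|} ≤ μ ({ω | ε ≤ X ω} ∪ {ω | ε ≤ (-X) ω}) := by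
        refine measure_mono fun ω (hω : ε < |X ω|) => ?_
        rcases lt_abs.1 hω with hω | hω
        exacts [Or.inl hω.le, Or.inr hω.le]
    _ ≤ ENNReal.ofReal (δ / 2) + ENNReal.ofReal (δ / 2) :=
        (measure_union_le _ _).trans (add_le_add (htail h) (htail h.neg))
    _ = ENNReal.ofReal δ := by
        rw [← ENNReal.ofReal_add (by positivity) (by positivity), add_halves]

theorem MeasureTheory.ofReal_one_sub_le_of_measure_compl_le [IsProbabilityMeasure μ]
    {s : Set Ω} {δ : ℝ} (hδ : 0 ≤ δ) (h : μ sᶜ ≤ ENNReal.ofReal δ) :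
    ENNReal.ofReal (1 - δ) ≤ μ s :=
  calc ENNReal.ofReal (1 - δ) = 1 - ENNReal.ofReal δ := by
        rw [ENNReal.ofReal_sub _ hδ, ENNReal.ofReal_one]
    _ ≤ 1 - μ sᶜ := tsub_le_tsub_left h 1
    _ ≤ μ s := tsub_le_iff_right.2 (measure_univ (μ := μ) ▸ measure_univ_le_add_compl s)

def MeasureTheory.Filtration.comp {ι κ : Type*} [Preorder ι] [Preorder κ]
    (ℱ : Filtration κ m0) {f : ι → κ} (hf : Monotone f) : Filtration ι m0 where
  seq i := ℱ (f i)
  mono' _ _ hij := ℱ.mono (hf hij)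
  le' i := ℱ.le (f i)

@[simp]
theorem MeasureTheory.Filtration.comp_apply {ι κ : Type*} [Preorder ι] [Preorder κ]
    (ℱ : Filtration κ m0) {f : ι → κ} (hf : Monotone f) (i : ι) : ℱ.comp hf i = ℱ (f i) := rfl

theorem ProbabilityTheory.hasSubgaussianMGF_sum_residue [IsProbabilityMeasure μ]
    {F : Filtration ℕ m0} {τ : ℕ} {X : ℕ → Ω → ℝ} {c : ℕ → ℝ≥0} (hX : StronglyAdapted F X)
    (hcond : ∀ t, τ ≤ t → μ[X t|F (t - τ)] =ᵐ[μ] 0) (hcond0 : ∀ t, t < τ → μ[X t] = 0)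
    (hbd : ∀ t, ∀ᵐ ω ∂μ, |X t ω| ≤ c t) {r : ℕ} (hr : r < τ) (n : ℕ) :
    HasSubgaussianMGF (fun ω => ∑ i ∈ range n, X (r + τ * i) ω)
      (∑ i ∈ range n, c (r + τ * i) ^ 2) μ := by
  have hmono : Monotone fun i => r + τ * i := fun _ _ hij =>
    Nat.add_le_add_left (Nat.mul_le_mul_left τ hij) r
  refine hasSubgaussianMGF_sum_of_condExp_eq_zero (ℱ := F.comp hmono) (fun i => hX _)
    (by simpa using hcond0 r hr) (fun i => ?_) (fun i => hbd _) n
  have hidx : r + τ * (i + 1) - τ = r + τ * i := by rw [mul_add_one]; omega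
  simpa [hidx] using hcond (r + τ * (i + 1)) (by rw [mul_add_one]; omega)

theorem MeasureTheory.ofReal_one_sub_le_measure_abs_sum_le_sqrt [IsProbabilityMeasure μ]
    {ι : Type*} (s : Finset ι) {S : ι → Ω → ℝ} {a : ι → ℝ} {δ : ℝ} (hδ : 0 ≤ δ)
    (ha : ∀ i ∈ s, 0 ≤ a i) (h : ∀ i ∈ s, μ {ω | √(a i) < |S i ω|} ≤ ENNReal.ofReal (δ / #s)) :
    ENNReal.ofReal (1 - δ) ≤ μ {ω | |∑ i ∈ s, S i ω| ≤ √(#s * ∑ i ∈ s, a i)} := by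
  refine ofReal_one_sub_le_of_measure_compl_le hδ ?_
  calc μ {ω | |∑ i ∈ s, S i ω| ≤ √(#s * ∑ i ∈ s, a i)}ᶜ
      ≤ μ (⋃ i ∈ s, {ω | √(a i) < |S i ω|}) := by
        refine measure_mono fun ω hω => ?_
        simp only [Set.mem_compl_iff, Set.mem_ofPred_eq, Set.mem_iUnion, exists_prop] at hω ⊢
        by_contra! hgood
        exact hω (abs_sum_le_sqrt_card_mul_sum s hgood ha)
    _ ≤ ∑ i ∈ s, μ {ω | √(a i) < |S i ω|} := measure_biUnion_finset_le _ _
    _ ≤ ∑ i ∈ s, ENNReal.ofReal (δ / #s) := sum_le_sum h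
    _ ≤ ENNReal.ofReal δ := by
        rw [sum_const, nsmul_eq_mul, ← ENNReal.ofReal_natCast,
          ← ENNReal.ofReal_mul (by positivity)]
        refine ENNReal.ofReal_le_ofReal ?_
        rcases eq_or_ne (#s : ℝ) 0 with h0 | h0
        · simp [h0, hδ]
        · rw [mul_div_cancel₀ _ h0]

end

theorem shifted_azuma_hoeffding
    {Ω : Type*} [MeasurableSpace Ω] (μ : Measure Ω) [IsProbabilityMeasure μ]
    (F : Filtration ℕ (by infer_instance : MeasurableSpace Ω))
    (τ : ℕ) (hτ : 1 ≤ τ)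
    (X : ℕ → Ω → ℝ) (Xbar : ℕ → ℝ)
    (hadapted : StronglyAdapted F X)
    (hcond : ∀ t, τ ≤ t → μ[X t | F (t - τ)] =ᵐ[μ] 0)
    (hcond0 : ∀ t, t < τ → ∫ ω, X t ω ∂μ = 0)
    (hbd : ∀ t, ∀ᵐ ω ∂μ, |X t ω| ≤ Xbar t)
    (t : ℕ) (δ : ℝ) (hδ : δ ∈ Set.Ioo (0:ℝ) 1) :
    ENNReal.ofReal (1 - δ) ≤
      μ {ω | |∑ k ∈ Finset.range (t + 1), X k ω| ≤
        Real.sqrt (2 * τ * (∑ k ∈ Finset.range (t + 1), (Xbar k) ^ 2) *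
          Real.log (2 * τ / δ))} := by
  obtain ⟨hδ0, hδ1⟩ := hδ
  have hτ1 : (1 : ℝ) ≤ τ := Nat.one_le_cast.2 hτ
  have hXbar (k : ℕ) : 0 ≤ Xbar k := (hbd k).exists.elim fun _ h => (abs_nonneg _).trans h
  have hL : 0 ≤ log (2 * τ / δ) := log_nonneg (by rw [le_div_iff₀ hδ0]; nlinarith)
  set n : ℕ → ℕ := fun r => (t + 1 - r) ⌈/⌉ τ
  set V : ℕ → ℝ := fun r => ∑ i ∈ range (n r), Xbar (r + τ * i) ^ 2
  have hresidue (r : ℕ) (hr : r < τ) : μ {ω | √(2 * V r * log (2 * τ / δ))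
      < |∑ i ∈ range (n r), X (r + τ * i) ω|} ≤ ENNReal.ofReal (δ / #(range τ)) := by
    have hsubG := hasSubgaussianMGF_sum_residue (c := fun k => (Xbar k).toNNReal) hadapted hcond
      hcond0 (fun k => by simpa [hXbar k] using hbd k) hr (n r)
    have := hsubG.measure_sqrt_lt_abs_le (by positivity)
      ((div_le_self hδ0.le hτ1).trans (by linarith))
    push_cast [Real.coe_toNNReal _ (hXbar _), div_div_eq_mul_div] at this
    rwa [card_range]
  have hproxy : 2 * τ * (∑ k ∈ range (t + 1), Xbar k ^ 2) * log (2 * τ / δ)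
      = #(range τ) * ∑ r ∈ range τ, 2 * V r * log (2 * τ / δ) := by
    rw [sum_range_eq_sum_residues (fun k => Xbar k ^ 2) hτ, card_range, ← sum_mul, ← mul_sum]
    ring
  rw [hproxy]
  simp only [sum_range_eq_sum_residues _ hτ (t + 1)]
  exact ofReal_one_sub_le_measure_abs_sum_le_sqrt _ hδ0.le (fun r _ => by positivity)
    fun r hr => hresidue r (mem_range.1 hr)
end

section
/- Let γ ∈ (0,1), and consider a Markov decision process with finite state-action set Z, reward r : Z → [0, r̄], transition matrix P (row-stochastic), and Bellman operator TD(Q) = r + γ P Q. Let W be a finite set, φ : Z → W, Φ the lift operator and Π the conditional expectation operator for a distribution d with positive marginals on W. Suppose Q* is the fixed point of TD and satisfies the fiber-variation bound |Q*(z) − Q*(z')| ≤ ε when φ(z) = φ(z'). Then the fixed point Q̂ of g = Π ∘ TD ∘ Φ satisfies sup_{z ∈ Z} |Q̂(φ(z)) − Q*(z)| ≤ ε/(1−γ). -/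
/-!
Write `E = Q̂ ∘ φ - Q*` and use the sup norm on `Z → ℝ`. On the fiber of `φ z`, the Bellman
operator (a `γ`-contraction) keeps `TD (Q̂ ∘ φ)` within `γ ‖E‖` of `TD Q* = Q*`, and `Q*` stays
within `ε` of `Q* z` there; averaging over the fiber preserves these bounds, so
`‖E‖ ≤ γ ‖E‖ + ε`, i.e. `‖E‖ ≤ ε / (1 - γ)`.
-/

open Finset

lemma abs_sum_mul_le_sum_mul {ι : Type*} (s : Finset ι) {w f : ι → ℝ} {C : ℝ}
    (hw : ∀ i ∈ s, 0 ≤ w i) (hf : ∀ i ∈ s, |f i| ≤ C) :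
    |∑ i ∈ s, w i * f i| ≤ (∑ i ∈ s, w i) * C :=
  calc |∑ i ∈ s, w i * f i| ≤ ∑ i ∈ s, |w i * f i| := abs_sum_le_sum_abs _ _
    _ ≤ ∑ i ∈ s, w i * C := sum_le_sum fun i hi => by
        rw [abs_mul, abs_of_nonneg (hw i hi)]
        exact mul_le_mul_of_nonneg_left (hf i hi) (hw i hi)
    _ = (∑ i ∈ s, w i) * C := (sum_mul _ _ _).symm

lemma le_div_one_sub_of_le_mul_add {M γ ε : ℝ} (hγ : γ < 1) (h : M ≤ γ * M + ε) :
    M ≤ ε / (1 - γ) := by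
  rw [le_div_iff₀ (sub_pos.2 hγ)]
  linarith

section

variable {Z W : Type*} [Fintype Z]

noncomputable def bellmanOp (γ : ℝ) (r : Z → ℝ) (P : Z → Z → ℝ) (Q : Z → ℝ) (z : Z) : ℝ :=
  r z + γ * ∑ z' : Z, P z z' * Q z'

lemma abs_bellmanOp_sub_le {γ : ℝ} (hγ : 0 ≤ γ) (r : Z → ℝ) {P : Z → Z → ℝ}
    (hP0 : ∀ z z', 0 ≤ P z z') (hP1 : ∀ z, ∑ z' : Z, P z z' = 1) (Q Q' : Z → ℝ) (z : Z) :
    |bellmanOp γ r P Q z - bellmanOp γ r P Q' z| ≤ γ * ‖Q - Q'‖ := by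
  have hrow : |∑ z' : Z, P z z' * (Q - Q') z'| ≤ ‖Q - Q'‖ := by
    simpa only [hP1, one_mul] using abs_sum_mul_le_sum_mul univ (fun z' _ => hP0 z z')
      fun z' _ => (Real.norm_eq_abs _).symm.trans_le (norm_le_pi_norm (Q - Q') z')
  calc |bellmanOp γ r P Q z - bellmanOp γ r P Q' z|
      = γ * |∑ z' : Z, P z z' * (Q - Q') z'| := by
        rw [bellmanOp, bellmanOp, add_sub_add_left_eq_sub, ← mul_sub, abs_mul, abs_of_nonneg hγ]
        simp only [Pi.sub_apply, mul_sub, sum_sub_distrib]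
    _ ≤ γ * ‖Q - Q'‖ := mul_le_mul_of_nonneg_left hrow hγ

/-- The conditional expectation `Π` of the paper. -/
noncomputable def fiberAvg [DecidableEq W] (d : Z → ℝ) (φ : Z → W) (f : Z → ℝ) (w : W) : ℝ :=
  (∑ z ∈ univ.filter (fun z => φ z = w), d z * f z) / ∑ z ∈ univ.filter (fun z => φ z = w), d z

lemma abs_fiberAvg_sub_le [DecidableEq W] {d : Z → ℝ} {φ : Z → W} {w : W}
    (hd0 : ∀ z, 0 ≤ d z) (hfiber : 0 < ∑ z ∈ univ.filter (fun z => φ z = w), d z)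
    {f : Z → ℝ} {c C : ℝ} (hf : ∀ z, φ z = w → |f z - c| ≤ C) :
    |fiberAvg d φ f w - c| ≤ C := by
  set F := univ.filter (fun z => φ z = w)
  have hcenter : fiberAvg d φ f w - c = (∑ z ∈ F, d z * (f z - c)) / ∑ z ∈ F, d z := by
    rw [fiberAvg, eq_div_iff hfiber.ne', sub_mul, div_mul_cancel₀ _ hfiber.ne']
    simp only [mul_sub, sum_sub_distrib, ← sum_mul]
    ring
  rw [hcenter, abs_div, abs_of_pos hfiber, div_le_iff₀ hfiber, mul_comm C]
  exact abs_sum_mul_le_sum_mul F (fun z _ => hd0 z) fun z hz => hf z (mem_filter.1 hz).2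

end

theorem truncated_bellman_fixed_point_error_general
    {Z W : Type*} [Fintype Z] [Fintype W]
    [DecidableEq W]
    (γ : ℝ) (hγ : γ ∈ Set.Ioo (0:ℝ) 1)
    (r : Z → ℝ)
    (P : Z → Z → ℝ) (hP0 : ∀ z z', 0 ≤ P z z') (hP1 : ∀ z, ∑ z' : Z, P z z' = 1)
    (φ : Z → W)
    (d : Z → ℝ) (hd0 : ∀ z, 0 ≤ d z)
    (hfiber : ∀ w : W, 0 < ∑ z ∈ Finset.univ.filter (fun z => φ z = w), d z)
    (Qstar : Z → ℝ)
    (hQstar : ∀ z : Z, Qstar z = r z + γ * ∑ z' : Z, P z z' * Qstar z')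
    (ε : ℝ)
    (hvar : ∀ z z' : Z, φ z = φ z' → |Qstar z - Qstar z'| ≤ ε)
    (Qhat : W → ℝ)
    (hQhat : ∀ w : W,
      Qhat w =
        (∑ z ∈ Finset.univ.filter (fun z => φ z = w),
            d z * (r z + γ * ∑ z' : Z, P z z' * Qhat (φ z'))) /
          (∑ z ∈ Finset.univ.filter (fun z => φ z = w), d z)) :
    ∀ z : Z, |Qhat (φ z) - Qstar z| ≤ ε / (1 - γ) := by
  intro z₀
  have hε : 0 ≤ ε := by simpa using hvar z₀ z₀ rfl
  have hfix (z : Z) : bellmanOp γ r P Qstar z = Qstar z := (hQstar z).symm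
  set E : Z → ℝ := Qhat ∘ φ - Qstar
  have hstep (z : Z) : |E z| ≤ γ * ‖E‖ + ε := by
    change |Qhat (φ z) - Qstar z| ≤ _
    rw [hQhat]
    refine abs_fiberAvg_sub_le (f := bellmanOp γ r P (Qhat ∘ φ)) hd0 (hfiber _) fun z' hz' => ?_
    calc |bellmanOp γ r P (Qhat ∘ φ) z' - Qstar z|
        ≤ |bellmanOp γ r P (Qhat ∘ φ) z' - bellmanOp γ r P Qstar z'| + |Qstar z' - Qstar z| := by
          simpa only [hfix] using abs_sub_le _ (bellmanOp γ r P Qstar z') _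
      _ ≤ γ * ‖E‖ + ε :=
          add_le_add (abs_bellmanOp_sub_le hγ.1.le r hP0 hP1 _ _ z') (hvar z' z hz')
  have hE : ‖E‖ ≤ γ * ‖E‖ + ε :=
    (pi_norm_le_iff_of_nonneg (add_nonneg (mul_nonneg hγ.1.le (norm_nonneg E)) hε)).2 fun z =>
      (Real.norm_eq_abs _).trans_le (hstep z)
  exact (Real.norm_eq_abs _ ▸ norm_le_pi_norm E z₀).trans (le_div_one_sub_of_le_mul_add hγ.2 hE)

theorem truncated_bellman_fixed_point_error
    {Z W : Type*} [Fintype Z] [Fintype W] [Nonempty Z] [Nonempty W]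
    [DecidableEq W]
    (γ rbar : ℝ) (hγ : γ ∈ Set.Ioo (0:ℝ) 1)
    (r : Z → ℝ) (hr : ∀ z, 0 ≤ r z ∧ r z ≤ rbar)
    (P : Z → Z → ℝ) (hP0 : ∀ z z', 0 ≤ P z z') (hP1 : ∀ z, ∑ z' : Z, P z z' = 1)
    (φ : Z → W) (hφ : Function.Surjective φ)
    (d : Z → ℝ) (hd0 : ∀ z, 0 ≤ d z) (hd1 : ∑ z : Z, d z = 1)
    (hfiber : ∀ w : W, 0 < ∑ z ∈ Finset.univ.filter (fun z => φ z = w), d z)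
    (Qstar : Z → ℝ)
    (hQstar : ∀ z : Z, Qstar z = r z + γ * ∑ z' : Z, P z z' * Qstar z')
    (ε : ℝ)
    (hvar : ∀ z z' : Z, φ z = φ z' → |Qstar z - Qstar z'| ≤ ε)
    (Qhat : W → ℝ)
    (hQhat : ∀ w : W,
      Qhat w =
        (∑ z ∈ Finset.univ.filter (fun z => φ z = w),
            d z * (r z + γ * ∑ z' : Z, P z z' * Qhat (φ z'))) /
          (∑ z ∈ Finset.univ.filter (fun z => φ z = w), d z)) :
    ∀ z : Z, |Qhat (φ z) - Qstar z| ≤ ε / (1 - γ) :=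
  truncated_bellman_fixed_point_error_general γ hγ r P hP0 hP1 φ d hd0 hfiber Qstar hQstar ε hvar
    Qhat hQhat
end
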